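/- Define, for r ∈ (1, √3), k(r) = √((1 + r²)(3 − r²))/(2r) and F(r) = ((1 − r²)/r)·K(k(r)) + 2r·E(k(r)), where K and E are the complete elliptic integrals of the first and second kind. Then lim_{r → 1⁺} F(r) = 2 and lim_{r → √3⁻} F(r) = 2π/√3. -/

import Mathlib

/-!
As `r → √3⁻` the modulus `k(r)` tends to `0`, where `K` and `E` are continuous with value `π/2`,
so `F` is simply continuous at `√3`. As `r → 1⁺`, `k(r) → 1` and `E(k) → E(1) = ∫ cos = 1`, while
`K` blows up; but `1 - k(r)² = (r² - 1)(r² + 3)/(4r²)`, so the first term of `F` is a bounded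
multiple of `(1 - k²) K(k) ≤ (π/2) √(1 - k²)`, which tends to `0`.
-/

open Real Filter

/-- The complete elliptic integral of the first kind. -/
noncomputable def ellipticK (k : ℝ) : ℝ :=
  ∫ x in (0 : ℝ)..(π / 2), (Real.sqrt (1 - k ^ 2 * Real.sin x ^ 2))⁻¹

/-- The complete elliptic integral of the second kind. -/
noncomputable def ellipticE (k : ℝ) : ℝ :=
  ∫ x in (0 : ℝ)..(π / 2), Real.sqrt (1 - k ^ 2 * Real.sin x ^ 2)

/-- The modulus `k(r) = √((1+r²)(3−r²))/(2r)`. -/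
noncomputable def kmod (r : ℝ) : ℝ := Real.sqrt ((1 + r ^ 2) * (3 - r ^ 2)) / (2 * r)

/-- The area function `F(r) = ((1−r²)/r)K(k(r)) + 2rE(k(r))`. -/
noncomputable def Ffun (r : ℝ) : ℝ :=
  ((1 - r ^ 2) / r) * ellipticK (kmod r) + 2 * r * ellipticE (kmod r)

theorem continuous_ellipticE : Continuous ellipticE := by
  apply intervalIntegral.continuous_parametric_intervalIntegral_of_continuous'
    (f := fun k x => Real.sqrt (1 - k ^ 2 * Real.sin x ^ 2))
  fun_prop

theorem ellipticE_zero : ellipticE 0 = π / 2 := by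
  simp [ellipticE]

theorem ellipticE_one : ellipticE 1 = 1 := by
  have h : ∀ x ∈ Set.uIcc 0 (π / 2), Real.sqrt (1 - 1 ^ 2 * Real.sin x ^ 2) = Real.cos x := by
    intro x hx
    rw [Set.uIcc_of_le (by positivity)] at hx
    rw [one_pow, one_mul, ← cos_sq', Real.sqrt_sq
      (Real.cos_nonneg_of_mem_Icc ⟨by linarith [hx.1, Real.pi_pos], hx.2⟩)]
  rw [ellipticE, intervalIntegral.integral_congr h, integral_cos]
  simp

theorem ellipticK_zero : ellipticK 0 = π / 2 := by
  simp [ellipticK]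

theorem ellipticK_nonneg (k : ℝ) : 0 ≤ ellipticK k :=
  intervalIntegral.integral_nonneg (by positivity) fun _ _ => by positivity

theorem one_sub_sq_le_one_sub_sq_mul_sin_sq (k x : ℝ) :
    1 - k ^ 2 ≤ 1 - k ^ 2 * Real.sin x ^ 2 := by
  nlinarith [Real.sin_sq_le_one x, sq_nonneg k]

-- Near `k`, the integrand of `K` agrees with the jointly continuous `(√(max c (1 - k² sin² x)))⁻¹`.
theorem continuousAt_ellipticK {k : ℝ} (hk : k ^ 2 < 1) : ContinuousAt ellipticK k := by
  set c := (1 - k ^ 2) / 2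
  have hc : 0 < c := by simp only [c]; linarith
  have hG : Continuous fun k : ℝ => ∫ x in (0 : ℝ)..(π / 2),
      (Real.sqrt (max c (1 - k ^ 2 * Real.sin x ^ 2)))⁻¹ := by
    refine intervalIntegral.continuous_parametric_intervalIntegral_of_continuous' ?_ _ _
    refine (Real.continuous_sqrt.comp (by fun_prop)).inv₀ fun p => ?_
    exact (Real.sqrt_pos.mpr (lt_max_of_lt_left hc)).ne'
  have hnear : ∀ᶠ k' in nhds k, k' ^ 2 < 1 - c :=
    (continuous_pow 2).continuousAt.eventually_lt continuousAt_const (by simp only [c]; linarith)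
  refine hG.continuousAt.congr (Filter.EventuallyEq.symm ?_)
  filter_upwards [hnear] with k' hk'
  refine intervalIntegral.integral_congr fun x _ => ?_
  rw [max_eq_right (by linarith [one_sub_sq_le_one_sub_sq_mul_sin_sq k' x])]

theorem ellipticK_le {k : ℝ} (hk : k ^ 2 < 1) :
    ellipticK k ≤ π / 2 / Real.sqrt (1 - k ^ 2) := by
  have hs : 0 < Real.sqrt (1 - k ^ 2) := Real.sqrt_pos.mpr (by linarith)
  have hbound : ∀ x, (Real.sqrt (1 - k ^ 2 * Real.sin x ^ 2))⁻¹ ≤ (Real.sqrt (1 - k ^ 2))⁻¹ :=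
    fun x => inv_anti₀ hs (Real.sqrt_le_sqrt (one_sub_sq_le_one_sub_sq_mul_sin_sq k x))
  have hint : IntervalIntegrable (fun x => (Real.sqrt (1 - k ^ 2 * Real.sin x ^ 2))⁻¹)
      MeasureTheory.volume 0 (π / 2) := by
    refine Continuous.intervalIntegrable
      ((Real.continuous_sqrt.comp (by fun_prop)).inv₀ fun x => ?_) _ _
    exact (hs.trans_le (Real.sqrt_le_sqrt (one_sub_sq_le_one_sub_sq_mul_sin_sq k x))).ne'
  calc ellipticK k ≤ ∫ _ in (0 : ℝ)..(π / 2), (Real.sqrt (1 - k ^ 2))⁻¹ :=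
        intervalIntegral.integral_mono_on (by positivity) hint intervalIntegrable_const
          fun x _ => hbound x
    _ = π / 2 / Real.sqrt (1 - k ^ 2) := by simp [div_eq_mul_inv]

theorem tendsto_one_sub_sq_mul_ellipticK :
    Tendsto (fun k => (1 - k ^ 2) * ellipticK k) (nhdsWithin 1 (Set.Ioo (-1) 1)) (nhds 0) := by
  have hsqrt : Tendsto (fun k : ℝ => π / 2 * Real.sqrt (1 - k ^ 2))
      (nhdsWithin 1 (Set.Ioo (-1) 1)) (nhds 0) := by
    have : ContinuousAt (fun k : ℝ => π / 2 * Real.sqrt (1 - k ^ 2)) 1 := by fun_prop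
    simpa using this.tendsto.mono_left nhdsWithin_le_nhds
  have hk : ∀ᶠ k in nhdsWithin (1 : ℝ) (Set.Ioo (-1) 1), k ^ 2 < 1 := by
    filter_upwards [self_mem_nhdsWithin] with k ⟨hk₁, hk₂⟩
    nlinarith
  refine squeeze_zero' ?_ ?_ hsqrt
  · filter_upwards [hk] with k hk
    exact mul_nonneg (by linarith) (ellipticK_nonneg k)
  · filter_upwards [hk] with k hk
    calc (1 - k ^ 2) * ellipticK k
        ≤ Real.sqrt (1 - k ^ 2) ^ 2 * (π / 2 / Real.sqrt (1 - k ^ 2)) := by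
          rw [Real.sq_sqrt (by linarith)]
          exact mul_le_mul_of_nonneg_left (ellipticK_le hk) (by linarith)
      _ = π / 2 * Real.sqrt (1 - k ^ 2) := by
          have hs : 0 < Real.sqrt (1 - k ^ 2) := Real.sqrt_pos.mpr (by linarith)
          field_simp

theorem kmod_one : kmod 1 = 1 := by
  norm_num [kmod, show Real.sqrt 4 = 2 by
    rw [show (4 : ℝ) = 2 ^ 2 by norm_num, Real.sqrt_sq zero_le_two]]

theorem kmod_sqrt_three : kmod (Real.sqrt 3) = 0 := by
  simp [kmod]

theorem continuousAt_kmod {r : ℝ} (hr : r ≠ 0) : ContinuousAt kmod r :=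
  ((Real.continuous_sqrt.comp (by fun_prop)).continuousAt).div (by fun_prop) (by simpa using hr)

theorem one_sub_kmod_sq {r : ℝ} (hr : r ≠ 0) (hr3 : r ^ 2 ≤ 3) :
    1 - kmod r ^ 2 = (r ^ 2 - 1) * (r ^ 2 + 3) / (4 * r ^ 2) := by
  rw [kmod, div_pow, Real.sq_sqrt (by nlinarith)]
  field_simp
  ring

theorem kmod_mem_Ioo {r : ℝ} (hr1 : 1 < r) (hr3 : r ^ 2 < 3) : kmod r ∈ Set.Ioo (-1) 1 := by
  have hk0 : 0 ≤ kmod r := div_nonneg (Real.sqrt_nonneg _) (by linarith)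
  have hk : 0 < 1 - kmod r ^ 2 := by
    rw [one_sub_kmod_sq (by positivity) hr3.le]
    have : 0 < r ^ 2 - 1 := by nlinarith
    positivity
  constructor <;> nlinarith

theorem tendsto_kmod_nhdsGT_one :
    Tendsto kmod (nhdsWithin 1 (Set.Ioi 1)) (nhdsWithin 1 (Set.Ioo (-1) 1)) := by
  refine tendsto_nhdsWithin_iff.mpr ⟨?_, ?_⟩
  · simpa [kmod_one] using (continuousAt_kmod one_ne_zero).tendsto.mono_left nhdsWithin_le_nhds
  · filter_upwards [Ioo_mem_nhdsGT (by norm_num : (1 : ℝ) < 3 / 2)] with r ⟨hr1, hr2⟩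
    exact kmod_mem_Ioo hr1 (by nlinarith)

-- Exhibits the factor `1 - k²` that tames the logarithmic blow-up of `K` as `r → 1⁺`.
theorem Ffun_eq {r : ℝ} (hr : r ≠ 0) (hr3 : r ^ 2 ≤ 3) :
    Ffun r = -(4 * r / (r ^ 2 + 3)) * ((1 - kmod r ^ 2) * ellipticK (kmod r))
      + 2 * r * ellipticE (kmod r) := by
  rw [Ffun, one_sub_kmod_sq hr hr3]
  field_simp
  ring

theorem tendsto_Ffun_nhdsGT_one : Tendsto Ffun (nhdsWithin 1 (Set.Ioi 1)) (nhds 2) := by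
  have hk := tendsto_kmod_nhdsGT_one
  have hK := tendsto_one_sub_sq_mul_ellipticK.comp hk
  have hE := (continuous_ellipticE.tendsto 1).comp (hk.mono_right nhdsWithin_le_nhds)
  have hlim : Tendsto (fun r => -(4 * r / (r ^ 2 + 3)) * ((1 - kmod r ^ 2) * ellipticK (kmod r))
      + 2 * r * ellipticE (kmod r)) (nhdsWithin 1 (Set.Ioi 1))
      (nhds (-(4 * 1 / (1 ^ 2 + 3)) * 0 + 2 * 1 * ellipticE 1)) := by
    refine (Tendsto.mul ?_ hK).add (Tendsto.mul ?_ hE) <;>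
      refine ContinuousAt.tendsto ?_ |>.mono_left nhdsWithin_le_nhds <;> fun_prop (disch := norm_num)
  rw [ellipticE_one] at hlim
  refine (hlim.congr' ?_).trans (by norm_num)
  filter_upwards [Ioo_mem_nhdsGT (by norm_num : (1 : ℝ) < 3 / 2)] with r ⟨hr1, hr2⟩
  exact (Ffun_eq (by positivity) (by nlinarith)).symm

theorem continuousAt_Ffun {r : ℝ} (hr : r ≠ 0) (hk : kmod r ^ 2 < 1) : ContinuousAt Ffun r :=
  (((continuousAt_const.sub (continuousAt_id.pow 2)).div continuousAt_id hr).mul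
    ((continuousAt_ellipticK hk).comp (continuousAt_kmod hr))).add
    ((continuousAt_const.mul continuousAt_id).mul
      (continuous_ellipticE.continuousAt.comp (continuousAt_kmod hr)))

theorem Ffun_sqrt_three : Ffun (Real.sqrt 3) = 2 * π / Real.sqrt 3 := by
  have h3 : Real.sqrt 3 ^ 2 = 3 := Real.sq_sqrt zero_le_three
  have h0 : Real.sqrt 3 ≠ 0 := by positivity
  rw [Ffun, kmod_sqrt_three, ellipticK_zero, ellipticE_zero, h3]
  field_simp
  linear_combination 2 * h3

/-- the endpoint limits of the area function on `(1, √3)`. -/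
theorem stmt_6 :
    Tendsto Ffun (nhdsWithin 1 (Set.Ioi (1 : ℝ))) (nhds 2) ∧
    Tendsto Ffun (nhdsWithin (Real.sqrt 3) (Set.Iio (Real.sqrt 3)))
      (nhds (2 * π / Real.sqrt 3)) := by
  refine ⟨tendsto_Ffun_nhdsGT_one, ?_⟩
  have hF := (continuousAt_Ffun (r := Real.sqrt 3) (by positivity)
    (by simp [kmod_sqrt_three])).tendsto
  rw [Ffun_sqrt_three] at hF
  exact hF.mono_left nhdsWithin_le_nhds
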